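/- Soundness of constraint reduction: if a list of deducibility constraints C reduces in one step to C' with associated substitution θ, and σ is a solution of C', then θ∘σ is a solution of C. Consequently, if C reduces (in many steps) to a constraint system in solved form, then C is satisfiable. -/

import Mathlib

/-- Dolev-Yao messages with variables. -/
inductive MsgV : Type
  | name : ℕ → MsgV
  | var  : ℕ → MsgV
  | pair : MsgV → MsgV → MsgV
  | enc  : MsgV → MsgV → MsgV
  deriving DecidableEq

open MsgV

/-- Homomorphic extension of a substitution to messages. -/
def substT (θ : ℕ → MsgV) : MsgV → MsgV
  | name a => name a
  | var x => θ x
  | pair m n => pair (substT θ m) (substT θ n)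
  | enc m k => enc (substT θ m) (substT θ k)

/-- Composition of substitutions: `comp θ ρ` applies θ first, then ρ. -/
def comp (θ ρ : ℕ → MsgV) : ℕ → MsgV := fun x => substT ρ (θ x)

/-- Variables occurring in a message. -/
def varsT : MsgV → Finset ℕ
  | name _ => ∅
  | var x => {x}
  | pair m n => varsT m ∪ varsT n
  | enc m k => varsT m ∪ varsT k

/-- Variables occurring in a finite set of messages. -/
def varsS (S : Finset MsgV) : Finset ℕ := S.biUnion varsT

/-- Ground (variable-free) messages. -/
def groundT (m : MsgV) : Prop := varsT m = ∅

/-- Ground substitutions. -/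
def groundSub (θ : ℕ → MsgV) : Prop := ∀ x, groundT (θ x)

/-- The Dolev-Yao sequent calculus (rules id, p_L, p_R, e_L, e_R). -/
inductive SC : Finset MsgV → MsgV → Prop
  | id {Γ M} : M ∈ Γ → SC Γ M
  | pR {Γ M N} : SC Γ M → SC Γ N → SC Γ (pair M N)
  | eR {Γ M K} : SC Γ M → SC Γ K → SC Γ (enc M K)
  | pL {Γ M N T} : pair M N ∈ Γ →
      SC (insert M (insert N Γ)) T → SC Γ T
  | eL {Γ M K T} : enc M K ∈ Γ → SC Γ K →
      SC (insert M (insert K Γ)) T → SC Γ T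

/-- Right-deducibility: derivability using only id, p_R, e_R. -/
inductive SCR : Finset MsgV → MsgV → Prop
  | id {Γ M} : M ∈ Γ → SCR Γ M
  | pR {Γ M N} : SCR Γ M → SCR Γ N → SCR Γ (pair M N)
  | eR {Γ M K} : SCR Γ M → SCR Γ K → SCR Γ (enc M K)

/-- Deducibility constraints: proper (Σ ⊩? M) or right (Σ ⊩_R? M). -/
inductive Constraint : Type
  | proper : Finset MsgV → MsgV → Constraint
  | rightc : Finset MsgV → MsgV → Constraint
  deriving DecidableEq

/-- Left side of a constraint. -/
def Constraint.lhs : Constraint → Finset MsgV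
  | .proper S _ => S
  | .rightc S _ => S

/-- Right side of a constraint. -/
def Constraint.rhs : Constraint → MsgV
  | .proper _ M => M
  | .rightc _ M => M

/-- Applying a substitution to a constraint. -/
def csub (θ : ℕ → MsgV) : Constraint → Constraint
  | .proper S M => .proper (S.image (substT θ)) (substT θ M)
  | .rightc S M => .rightc (S.image (substT θ)) (substT θ M)

/-- A ground substitution satisfies a single constraint. -/
def holds (θ : ℕ → MsgV) : Constraint → Prop
  | .proper S M => SC (S.image (substT θ)) (substT θ M)
  | .rightc S M => SCR (S.image (substT θ)) (substT θ M)

/-- A solution of a list of constraints: a ground substitution satisfying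
every constraint in the list. -/
def Solution (θ : ℕ → MsgV) (C : List Constraint) : Prop :=
  groundSub θ ∧ ∀ c ∈ C, holds θ c

/-- θ unifies M and N. -/
def Unifies (θ : ℕ → MsgV) (M N : MsgV) : Prop := substT θ M = substT θ N

/-- θ is the most general unifier of M and N (variable-conservative, as is
standard: it only moves variables of M and N, within those variables). -/
def IsMGU (θ : ℕ → MsgV) (M N : MsgV) : Prop :=
  Unifies θ M N ∧
  (∀ σ, Unifies σ M N → ∃ ρ, ∀ x, σ x = substT ρ (θ x)) ∧
  (∀ x, θ x ≠ var x → x ∈ varsT M ∪ varsT N ∧ varsT (θ x) ⊆ varsT M ∪ varsT N)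

/-- The identity substitution. -/
def idSub : ℕ → MsgV := fun x => var x

/-- One-step constraint reduction (rules C1–C5), labelled by the associated
substitution. -/
inductive Red : List Constraint → (ℕ → MsgV) → List Constraint → Prop
  | c1 {C₁ C₂ : List Constraint} {S : Finset MsgV} {M N : MsgV} {θ : ℕ → MsgV} :
      (∀ x, M ≠ var x) → N ∈ S → IsMGU θ M N →
      Red (C₁ ++ Constraint.rightc S M :: C₂) θ
          (C₁.map (csub θ) ++ C₂.map (csub θ))
  | c2p {C₁ C₂ : List Constraint} {S : Finset MsgV} {M N : MsgV} :
      Red (C₁ ++ Constraint.rightc S (pair M N) :: C₂) idSub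
          (C₁ ++ Constraint.rightc S M :: Constraint.rightc S N :: C₂)
  | c2e {C₁ C₂ : List Constraint} {S : Finset MsgV} {M N : MsgV} :
      Red (C₁ ++ Constraint.rightc S (enc M N) :: C₂) idSub
          (C₁ ++ Constraint.rightc S M :: Constraint.rightc S N :: C₂)
  | c3 {C₁ C₂ : List Constraint} {S : Finset MsgV} {M : MsgV} :
      Red (C₁ ++ Constraint.proper S M :: C₂) idSub
          (C₁ ++ Constraint.rightc S M :: C₂)
  | c4 {C₁ C₂ : List Constraint} {S : Finset MsgV} {M N U : MsgV} :
      pair M N ∉ S →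
      Red (C₁ ++ Constraint.proper (insert (pair M N) S) U :: C₂) idSub
          (C₁ ++ Constraint.proper (insert M (insert N S)) U :: C₂)
  | c5 {C₁ C₂ : List Constraint} {S : Finset MsgV} {M N U : MsgV} :
      enc M N ∉ S →
      Red (C₁ ++ Constraint.proper (insert (enc M N) S) U :: C₂) idSub
          (C₁ ++ Constraint.rightc (insert (enc M N) S) N ::
                Constraint.proper (insert M (insert N S)) U :: C₂)

/-- Multi-step constraint reduction, accumulating the composed substitution. -/
inductive RedStar : List Constraint → (ℕ → MsgV) → List Constraint → Prop
  | refl (C) : RedStar C idSub C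
  | step {C θ C' σ C''} : Red C θ C' → RedStar C' σ C'' →
      RedStar C (comp θ σ) C''

/-- Solved form: every constraint is Σ ⊩_R? x with x a variable. -/
def Solved (C : List Constraint) : Prop :=
  ∀ c ∈ C, ∃ (S : Finset MsgV) (x : ℕ), c = Constraint.rightc S (var x)

/-- The i-th constraint of a list (with a default). -/
def nth (C : List Constraint) (i : ℕ) : Constraint :=
  C.getD i (Constraint.proper ∅ (name 0))

/-- Deducibility constraint systems (Definition 6.5 of the paper):
(1) for i < j and every solution θ of the prefix before position j, the
θ-instance of the part of the j-th left side whose variables all occur in the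
i-th left side deduces the θ-instance of every member of the i-th left side;
(2) every variable first occurs on the right side of a constraint whose left
side does not contain it. -/
def DCSystem (C : List Constraint) : Prop :=
  (∀ i j, i < j → j < C.length →
      ∀ θ, Solution θ (C.take j) →
        ∀ N ∈ (nth C i).lhs,
          SC ((((nth C j).lhs).filter
                (fun m => varsT m ⊆ varsS ((nth C i).lhs))).image (substT θ))
             (substT θ N)) ∧
  (∀ x, (∃ c ∈ C, x ∈ varsT c.rhs ∪ varsS c.lhs) →
      ∃ i, i < C.length ∧ x ∈ varsT ((nth C i).rhs) ∧
           x ∉ varsS ((nth C i).lhs) ∧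
           ∀ j < i, x ∉ varsT ((nth C j).rhs) ∪ varsS ((nth C j).lhs))

/-!
Each rule can be run backwards on derivations. Under a solution σ of the reduct, the new
constraints rebuild a derivation of the one they replace: C2 by one `p_R`/`e_R` step, C3 because
right derivations are derivations, C4 and C5 by one `p_L`/`e_L` step (the key of C5 is supplied
by its right constraint), and C1 by the rule `id`, since θ identifies the right side with a member
of the left side; the other constraints are solved by `θ ∘ σ` because σ solves their
θ-instances. A solved form is solved by mapping every variable to the name shared by all left
sides, since then each constraint `Σ ⊩_R? x` becomes an instance of `id`.
-/

theorem substT_comp (θ ρ : ℕ → MsgV) (m : MsgV) :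
    substT (comp θ ρ) m = substT ρ (substT θ m) := by
  induction m <;> simp [substT, comp, *]

theorem comp_assoc (θ σ τ : ℕ → MsgV) : comp (comp θ σ) τ = comp θ (comp σ τ) := by
  funext x
  exact (substT_comp σ τ (θ x)).symm

theorem groundT_substT {σ : ℕ → MsgV} (hσ : groundSub σ) (m : MsgV) :
    groundT (substT σ m) := by
  induction m with
  | name a => rfl
  | var x => exact hσ x
  | pair m n ihm ihn | enc m n ihm ihn =>
    simp only [groundT, substT, varsT, Finset.union_eq_empty] at ihm ihn ⊢
    exact ⟨ihm, ihn⟩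

theorem groundSub_comp (θ : ℕ → MsgV) {σ : ℕ → MsgV} (hσ : groundSub σ) :
    groundSub (comp θ σ) :=
  fun x => groundT_substT hσ (θ x)

theorem SC.mono {Γ Γ' : Finset MsgV} {M : MsgV} (h : SC Γ M) (hΓ : Γ ⊆ Γ') : SC Γ' M := by
  induction h generalizing Γ' with
  | id hM => exact .id (hΓ hM)
  | pR _ _ ihM ihN => exact .pR (ihM hΓ) (ihN hΓ)
  | eR _ _ ihM ihK => exact .eR (ihM hΓ) (ihK hΓ)
  | pL hM _ ih =>
    exact .pL (hΓ hM) (ih (Finset.insert_subset_insert _ (Finset.insert_subset_insert _ hΓ)))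
  | eL hM _ _ ihK ih =>
    exact .eL (hΓ hM) (ihK hΓ)
      (ih (Finset.insert_subset_insert _ (Finset.insert_subset_insert _ hΓ)))

theorem SCR.toSC {Γ : Finset MsgV} {M : MsgV} (h : SCR Γ M) : SC Γ M := by
  induction h with
  | id hM => exact .id hM
  | pR _ _ ihM ihN => exact .pR ihM ihN
  | eR _ _ ihM ihK => exact .eR ihM ihK

theorem SC.insert_pair {Γ : Finset MsgV} {M N T : MsgV}
    (h : SC (insert M (insert N Γ)) T) : SC (insert (pair M N) Γ) T :=
  .pL (Finset.mem_insert_self _ _) <| h.mono <|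
    Finset.insert_subset_insert _ <| Finset.insert_subset_insert _ <| Finset.subset_insert _ _

theorem SC.insert_enc {Γ : Finset MsgV} {M K T : MsgV} (hK : SC (insert (enc M K) Γ) K)
    (h : SC (insert M (insert K Γ)) T) : SC (insert (enc M K) Γ) T :=
  .eL (Finset.mem_insert_self _ _) hK <| h.mono <|
    Finset.insert_subset_insert _ <| Finset.insert_subset_insert _ <| Finset.subset_insert _ _

theorem holds_comp (θ σ : ℕ → MsgV) (c : Constraint) :
    holds (comp θ σ) c ↔ holds σ (csub θ c) := by
  have himage (S : Finset MsgV) :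
      S.image (substT (comp θ σ)) = (S.image (substT θ)).image (substT σ) := by
    rw [Finset.image_image]
    exact Finset.image_congr fun m _ => substT_comp θ σ m
  cases c <;> simp only [holds, csub, himage, substT_comp]

theorem holds_rightc_of_unifies {θ : ℕ → MsgV} {S : Finset MsgV} {M N : MsgV}
    (hθ : Unifies θ M N) (hN : N ∈ S) (σ : ℕ → MsgV) :
    holds (comp θ σ) (.rightc S M) := by
  have hMN : substT (comp θ σ) M = substT (comp θ σ) N := by
    rw [substT_comp, substT_comp, hθ]
  show SCR _ _
  exact hMN ▸ SCR.id (Finset.mem_image_of_mem _ hN)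

theorem Solution.comp_of_map_csub {θ σ : ℕ → MsgV} {C : List Constraint}
    (h : Solution σ (C.map (csub θ))) : Solution (comp θ σ) C :=
  ⟨groundSub_comp θ h.1, fun c hc => (holds_comp θ σ c).2 (h.2 _ (List.mem_map_of_mem hc))⟩

theorem Solution.of_replace {σ : ℕ → MsgV} {C₁ D C₂ : List Constraint} {c : Constraint}
    (h : Solution σ (C₁ ++ (D ++ C₂))) (hc : (∀ d ∈ D, holds σ d) → holds σ c) :
    Solution σ (C₁ ++ c :: C₂) := by
  simp only [Solution, List.forall_mem_append, List.forall_mem_cons] at h ⊢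
  exact ⟨h.1, h.2.1, hc h.2.2.1, h.2.2.2⟩

theorem Red.solution_comp {C C' : List Constraint} {θ σ : ℕ → MsgV}
    (hred : Red C θ C') (hσ : Solution σ C') : Solution (comp θ σ) C := by
  cases hred with
  | c1 _ hN hθ =>
    rw [← List.map_append] at hσ
    exact hσ.comp_of_map_csub.of_replace (D := []) fun _ => holds_rightc_of_unifies hθ.1 hN σ
  | c2p =>
    exact hσ.of_replace (D := [_, _]) fun hD =>
      .pR (hD _ List.mem_cons_self) (hD _ (List.mem_cons_of_mem _ List.mem_cons_self))
  | c2e =>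
    exact hσ.of_replace (D := [_, _]) fun hD =>
      .eR (hD _ List.mem_cons_self) (hD _ (List.mem_cons_of_mem _ List.mem_cons_self))
  | c3 =>
    exact hσ.of_replace (D := [_]) fun hD => (hD _ List.mem_cons_self).toSC
  | c4 =>
    refine hσ.of_replace (D := [_]) fun hD => ?_
    have h := hD _ List.mem_cons_self
    simp only [holds, Finset.image_insert, substT] at h ⊢
    exact h.insert_pair
  | c5 =>
    refine hσ.of_replace (D := [_, _]) fun hD => ?_
    have hK := hD _ List.mem_cons_self
    have h := hD _ (List.mem_cons_of_mem _ List.mem_cons_self)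
    simp only [holds, Finset.image_insert, substT] at hK h ⊢
    exact hK.toSC.insert_enc h

theorem RedStar.solution_comp {C C' : List Constraint} {σ τ : ℕ → MsgV}
    (hred : RedStar C σ C') (hτ : Solution τ C') : Solution (comp σ τ) C := by
  induction hred with
  | refl => exact hτ
  | step hstep _ ih => exact comp_assoc _ _ τ ▸ hstep.solution_comp (ih hτ)

theorem Solved.solution_const {C : List Constraint} {a : ℕ} (hC : Solved C)
    (ha : ∀ c ∈ C, name a ∈ c.lhs) : Solution (fun _ => name a) C := by
  refine ⟨fun _ => rfl, fun c hc => ?_⟩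
  obtain ⟨S, x, rfl⟩ := hC c hc
  show SCR _ (name a)
  exact SCR.id (Finset.mem_image_of_mem _ (ha _ hc))

/-- Soundness of constraint reduction: one-step reduction reflects solutions
(via composition with the associated substitution); consequently, reducing to
a solved form (whose left sides all contain a common name) yields
satisfiability. -/
theorem constraint_reduction_sound :
    (∀ (C : List Constraint) (θ : ℕ → MsgV) (C' : List Constraint)
        (σ : ℕ → MsgV), Red C θ C' → Solution σ C' → Solution (comp θ σ) C) ∧
    (∀ (C : List Constraint) (σ : ℕ → MsgV) (C' : List Constraint) (a : ℕ),
        RedStar C σ C' → Solved C' → (∀ c ∈ C', name a ∈ c.lhs) →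
        ∃ τ, Solution τ C) :=
  ⟨fun _ _ _ _ hred hσ => hred.solution_comp hσ,
    fun _ _ _ _ hred hC ha => ⟨_, hred.solution_comp (hC.solution_const ha)⟩⟩
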